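/- arXiv:2401.08161 — 3 statements merged into one kernel-verified Lean document; each statement's English description precedes it below -/
import Mathlib

section
/- Let p be an odd prime, e ≥ 1, a ∈ p·Z/p^e Z with a ≠ 0, and b a unit in Z/p^e Z. Define φ on Z/p^e Z by φ(x) = a·x⁻¹ + b for units x and φ(x) = b otherwise. Let v = v_p(a) ≥ 1 be the p-adic valuation of (a lift of) a, and let l = ⌈e / v⌉. Then for every x₀ ∈ Z/p^e Z, φ^l(x₀) = φ^{l-1}(b). In particular, φ has a unique eventually-attracting fixed point x̃ = φ^{l-1}(b) and every orbit reaches it. -/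
open scoped Classical

/-- Truncated p-adic valuation on `Z/p^e Z`: `min (max{k : p^k ∣ y}, e)`, with
`vp 0 = e`. -/
def vp (p e : ℕ) (y : ZMod (p ^ e)) : ℕ :=
  if y = 0 then e else min (padicValNat p y.val) e

/-!
If `q` is nilpotent and `q ^ v ∣ a`, the inversive map `x ↦ a x⁻¹ + b` is a contraction for the
`q`-adic filtration: every value lies within `q ^ v` of `b`, and two points that agree modulo
`q ^ k` (with `k ≥ 1`, so that they are units together) have images agreeing modulo `q ^ (k + v)`,
because `a x⁻¹ - a y⁻¹ = a x⁻¹ y⁻¹ (y - x)`. Hence `φ^[n+1] x ≡ φ^[n] b` modulo `q ^ ((n + 1) v)`,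
and once `(n + 1) v ≥ e` with `q ^ e = 0` every orbit has collapsed onto the orbit of `b`.
For `Z/p^e Z` take `q = p` and `v = v_p(a)`.
-/

open Ring Function

theorem IsNilpotent.isUnit_iff_of_dvd_sub {R : Type*} [CommRing R] {q x y : R}
    (hq : IsNilpotent q) (h : q ∣ x - y) : IsUnit x ↔ IsUnit y := by
  obtain ⟨c, hc⟩ := h
  have hnil : IsNilpotent (x - y) := hc ▸ (Commute.all q c).isNilpotent_mul_right hq
  constructor
  · intro hx
    simpa using hnil.neg.isUnit_add_left_of_commute hx (Commute.all _ _)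
  · intro hy
    simpa using hnil.isUnit_add_left_of_commute hy (Commute.all _ _)

section InversiveMap

variable {R : Type*} [CommRing R] {q a : R} {v : ℕ}

noncomputable def inversiveMap (a b x : R) : R :=
  if IsUnit x then a * x⁻¹ʳ + b else b

theorem pow_dvd_inversiveMap_sub (ha : q ^ v ∣ a) (b x : R) :
    q ^ v ∣ inversiveMap a b x - b := by
  unfold inversiveMap
  split_ifs
  · simpa using ha.mul_right _
  · simp

theorem pow_add_dvd_inversiveMap_sub_inversiveMap (hq : IsNilpotent q) (ha : q ^ v ∣ a)
    (b : R) {k : ℕ} (hk : k ≠ 0) {x y : R} (hxy : q ^ k ∣ x - y) :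
    q ^ (k + v) ∣ inversiveMap a b x - inversiveMap a b y := by
  have hunit : IsUnit x ↔ IsUnit y :=
    hq.isUnit_iff_of_dvd_sub ((dvd_pow_self q hk).trans hxy)
  unfold inversiveMap
  by_cases hx : IsUnit x
  · have hy := hunit.mp hx
    rw [if_pos hx, if_pos hy]
    have key : a * x⁻¹ʳ + b - (a * y⁻¹ʳ + b) = -(a * (x - y)) * (x⁻¹ʳ * y⁻¹ʳ) := by
      linear_combination (a * y⁻¹ʳ) * mul_inverse_cancel x hx -
        (a * x⁻¹ʳ) * mul_inverse_cancel y hy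
    rw [key, pow_add, mul_comm]
    exact ((mul_dvd_mul ha hxy).neg_right).mul_right _
  · rw [if_neg hx, if_neg (mt hunit.mpr hx), sub_self]
    exact dvd_zero _

theorem pow_dvd_iterate_inversiveMap_sub (hq : IsNilpotent q) (ha : q ^ v ∣ a) (hv : v ≠ 0)
    (b : R) (n : ℕ) (x : R) :
    q ^ ((n + 1) * v) ∣ (inversiveMap a b)^[n + 1] x - (inversiveMap a b)^[n] b := by
  induction n with
  | zero => simpa using pow_dvd_inversiveMap_sub ha b x
  | succ n ih =>
    rw [iterate_succ_apply' _ (n + 1) x, iterate_succ_apply' _ n b, add_one_mul (n + 1)]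
    exact pow_add_dvd_inversiveMap_sub_inversiveMap hq ha b (by positivity) ih

theorem iterate_succ_inversiveMap_eq {e n : ℕ} (hqe : q ^ e = 0) (ha : q ^ v ∣ a) (hv : v ≠ 0)
    (hle : e ≤ (n + 1) * v) (b x : R) :
    (inversiveMap a b)^[n + 1] x = (inversiveMap a b)^[n] b := by
  have hdvd := pow_dvd_iterate_inversiveMap_sub ⟨e, hqe⟩ ha hv b n x
  rw [← Nat.add_sub_cancel' hle, pow_add, hqe, zero_mul, zero_dvd_iff] at hdvd
  exact sub_eq_zero.mp hdvd

theorem isFixedPt_iterate_inversiveMap {e n : ℕ} (hqe : q ^ e = 0) (ha : q ^ v ∣ a)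
    (hv : v ≠ 0) (hle : e ≤ (n + 1) * v) (b : R) :
    IsFixedPt (inversiveMap a b) ((inversiveMap a b)^[n] b) := by
  rw [IsFixedPt, ← iterate_succ_apply' (inversiveMap a b) n b, iterate_succ_inversiveMap_eq hqe ha hv hle]

end InversiveMap

theorem ZMod.inv_eq_ring_inverse {n : ℕ} {x : ZMod n} (hx : IsUnit x) : x⁻¹ = x⁻¹ʳ :=
  ZMod.inv_eq_of_mul_eq_one n x _ (mul_inverse_cancel x hx)

theorem ZMod.natCast_pow_self_eq_zero (p e : ℕ) : (p : ZMod (p ^ e)) ^ e = 0 := by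
  rw [← Nat.cast_pow, ZMod.natCast_self]

section ZModPrimePow

variable {p e : ℕ}

theorem ZMod.dvd_val_of_natCast_dvd (he : e ≠ 0) {a : ZMod (p ^ e)}
    (h : (p : ZMod (p ^ e)) ∣ a) : p ∣ a.val := by
  obtain ⟨c, rfl⟩ := h
  rw [ZMod.val_mul, Nat.dvd_mod_iff (dvd_pow_self p he), ZMod.val_natCast]
  exact ((Nat.dvd_mod_iff (dvd_pow_self p he)).mpr dvd_rfl).mul_right _

theorem natCast_pow_vp_dvd [NeZero (p ^ e)] (a : ZMod (p ^ e)) :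
    (p : ZMod (p ^ e)) ^ vp p e a ∣ a := by
  unfold vp
  split_ifs with ha
  · exact ha ▸ dvd_zero _
  · have := Nat.cast_dvd_cast (α := ZMod (p ^ e))
      ((pow_dvd_pow p (min_le_left _ e)).trans (pow_padicValNat_dvd (n := a.val)))
    rwa [Nat.cast_pow, ZMod.natCast_zmod_val] at this

theorem one_le_vp (hp : p.Prime) (he : 1 ≤ e) {a : ZMod (p ^ e)}
    (hpa : (p : ZMod (p ^ e)) ∣ a) (ha : a ≠ 0) : 1 ≤ vp p e a := by
  have : Fact p.Prime := ⟨hp⟩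
  rw [vp, if_neg ha]
  exact le_min (one_le_padicValNat_of_dvd ((ZMod.val_ne_zero a).mpr ha)
    (ZMod.dvd_val_of_natCast_dvd (by omega) hpa)) he

end ZModPrimePow

theorem stmt10_general (p : ℕ) (hp : p.Prime) (e : ℕ) (he : 1 ≤ e)
    (a b : ZMod (p ^ e)) (hpa : (p : ZMod (p ^ e)) ∣ a) (ha : a ≠ 0)
    (φ : ZMod (p ^ e) → ZMod (p ^ e))
    (hφ : ∀ x, φ x = if IsUnit x then a * x⁻¹ + b else b) :
    let v := vp p e a
    let l := (e + v - 1) / v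
    (∀ x0 : ZMod (p ^ e), φ^[l] x0 = φ^[l - 1] b) ∧
    φ (φ^[l - 1] b) = φ^[l - 1] b := by
  intro v l
  have : NeZero (p ^ e) := ⟨pow_ne_zero e hp.ne_zero⟩
  have hv : 0 < v := one_le_vp hp he hpa ha
  have hl : l - 1 + 1 = l := Nat.sub_add_cancel (Nat.div_pos (by omega) hv)
  have hle : e ≤ (l - 1 + 1) * v := by
    have : e + v - 1 < l * v + v := Nat.lt_div_mul_add hv
    rw [hl]
    omega
  obtain rfl : φ = inversiveMap a b := funext fun x => by
    rw [hφ, inversiveMap]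
    split_ifs with hx
    · rw [ZMod.inv_eq_ring_inverse hx]
    · rfl
  have hqe := ZMod.natCast_pow_self_eq_zero p e
  refine ⟨fun x => ?_, isFixedPt_iterate_inversiveMap hqe (natCast_pow_vp_dvd a) hv.ne' hle b⟩
  rw [← hl]
  exact iterate_succ_inversiveMap_eq hqe (natCast_pow_vp_dvd a) hv.ne' hle b x

/-- For `a ∈ p·Z/p^e Z`, `a ≠ 0`, `b` a unit, with `v = v_p(a)` and
`l = ⌈e/v⌉`, every orbit of the inversive map satisfies
`φ^l(x₀) = φ^{l-1}(b)`, and `φ^{l-1}(b)` is a fixed point of `φ`. -/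
theorem stmt10 (p : ℕ) (hp : p.Prime) (hp2 : p ≠ 2) (e : ℕ) (he : 1 ≤ e)
    (a b : ZMod (p ^ e)) (hpa : (p : ZMod (p ^ e)) ∣ a) (ha : a ≠ 0)
    (hb : IsUnit b)
    (φ : ZMod (p ^ e) → ZMod (p ^ e))
    (hφ : ∀ x, φ x = if IsUnit x then a * x⁻¹ + b else b) :
    let v := vp p e a
    let l := (e + v - 1) / v
    (∀ x0 : ZMod (p ^ e), φ^[l] x0 = φ^[l - 1] b) ∧
    φ (φ^[l - 1] b) = φ^[l - 1] b :=
  stmt10_general p hp e he a b hpa ha φ hφ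
end

section
/- Let p be an odd prime, e ≥ 1, a ∈ (Z/p^e Z)^×, b ∈ p·Z/p^e Z, and suppose t² - b t - a = (t - α)(t - β) with α, β ∈ (Z/p^e Z)^×. Then α - β is a unit in Z/p^e Z, and for any unit x₀ with x₀ ∉ {α, β} the orbit of x₀ under φ is purely periodic with least period ord(αβ⁻¹) computed modulo p^{e-k'}, where k' = max(v_p(x₀ - α), v_p(x₀ - β)). -/
/-!
With `b = α + β` and `a = -αβ`, the iterates of `φ` are ratios of consecutive terms of the
sequence `v k = orbitSeq α β x₀ k = (x₀ - β) αᵏ + (α - x₀) βᵏ`, namely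
`φᵏ(x₀) = v (k+1) / v k`. Modulo `p` we have `β ≡ -α`, so `v k ≡ 2α^(k+1)` or `2x₀αᵏ`
according to the parity of `k`; as `p` is odd, every `v k` is a unit. Hence `φᵏ(x₀) = x₀`
iff `v (k+1) - x₀ v k = -(x₀-α)(x₀-β)(αᵏ-βᵏ)` vanishes. Since `α - β` is a unit, one of
`x₀ - α`, `x₀ - β` is a unit, so `(x₀-α)(x₀-β) = p^k' · unit`, and the condition becomes
`(αβ⁻¹)ᵏ ≡ 1 mod p^(e-k')`.
-/

open scoped Classical
open Polynomial

lemma eq_add_and_eq_neg_mul_of_quadratic_eq {R : Type*} [CommRing R] {a b α β : R}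
    (h : (X ^ 2 - C b * X - C a : R[X]) = (X - C α) * (X - C β)) :
    b = α + β ∧ a = -(α * β) := by
  have h' : (X ^ 2 - C b * X - C a : R[X]) = X ^ 2 - C (α + β) * X + C (α * β) := by
    rw [h, C_add, C_mul]; ring
  have h1 := congrArg (coeff · 1) h'
  have h0 := congrArg (coeff · 0) h'
  simp [coeff_C] at h1 h0
  exact ⟨by linear_combination -h1, by linear_combination -h0⟩

section OrbitSeq

variable {R : Type*} [CommRing R] (α β x : R)

def orbitSeq (k : ℕ) : R := (x - β) * α ^ k + (α - x) * β ^ k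

lemma orbitSeq_zero : orbitSeq α β x 0 = α - β := by
  simp [orbitSeq]

lemma orbitSeq_one : orbitSeq α β x 1 = x * (α - β) := by
  simp only [orbitSeq]; ring

lemma orbitSeq_add_two (k : ℕ) :
    orbitSeq α β x (k + 2) = (α + β) * orbitSeq α β x (k + 1) - α * β * orbitSeq α β x k := by
  simp only [orbitSeq]; ring

lemma orbitSeq_succ_sub_mul (k : ℕ) :
    orbitSeq α β x (k + 1) - x * orbitSeq α β x k = -((x - α) * (x - β) * (α ^ k - β ^ k)) := by
  simp only [orbitSeq]; ring

lemma map_orbitSeq {S : Type*} [CommRing S] (f : R →+* S) (k : ℕ) :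
    f (orbitSeq α β x k) = orbitSeq (f α) (f β) (f x) k := by
  simp [orbitSeq]

lemma orbitSeq_neg_ne_zero {K : Type*} [CommRing K] [NoZeroDivisors K] {α x : K}
    (h2 : (2 : K) ≠ 0) (hα : α ≠ 0) (hx : x ≠ 0) (k : ℕ) : orbitSeq α (-α) x k ≠ 0 := by
  rcases Nat.even_or_odd k with hk | hk
  · have : orbitSeq α (-α) x k = 2 * α ^ (k + 1) := by
      simp only [orbitSeq, hk.neg_pow]; ring
    rw [this]; exact mul_ne_zero h2 (pow_ne_zero _ hα)
  · have : orbitSeq α (-α) x k = 2 * x * α ^ k := by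
      simp only [orbitSeq, hk.neg_pow]; ring
    rw [this]; exact mul_ne_zero (mul_ne_zero h2 hx) (pow_ne_zero _ hα)

end OrbitSeq

section Iterate

variable {n : ℕ} {α β x : ZMod n} {φ : ZMod n → ZMod n}

lemma iterate_mul_orbitSeq (hφ : ∀ y, IsUnit y → φ y = -(α * β) * y⁻¹ + (α + β))
    (hv : ∀ k, IsUnit (orbitSeq α β x k)) (k : ℕ) :
    φ^[k] x * orbitSeq α β x k = orbitSeq α β x (k + 1) := by
  induction k with
  | zero => rw [orbitSeq_zero, orbitSeq_one, Function.iterate_zero, id]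
  | succ k ih =>
    set y := φ^[k] x
    have hy : IsUnit y := isUnit_of_mul_isUnit_left (ih ▸ hv (k + 1))
    have hinv : y⁻¹ * y = 1 := ZMod.inv_mul_of_unit y hy
    rw [Function.iterate_succ_apply', hφ y hy, orbitSeq_add_two]
    linear_combination (α * β * y⁻¹) * ih - α * β * orbitSeq α β x k * hinv

lemma iterate_eq_self_iff (hφ : ∀ y, IsUnit y → φ y = -(α * β) * y⁻¹ + (α + β))
    (hv : ∀ k, IsUnit (orbitSeq α β x k)) (k : ℕ) :
    φ^[k] x = x ↔ (x - α) * (x - β) * (α ^ k - β ^ k) = 0 := by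
  rw [← (hv k).mul_left_inj, iterate_mul_orbitSeq hφ hv, ← sub_eq_zero, orbitSeq_succ_sub_mul,
    neg_eq_zero]

end Iterate

section PrimePower

variable {p e : ℕ}

lemma vp_le (y : ZMod (p ^ e)) : vp p e y ≤ e := by
  unfold vp; split_ifs <;> omega

variable [hp : Fact p.Prime]

lemma isUnit_iff_not_dvd_val (he : e ≠ 0) (y : ZMod (p ^ e)) : IsUnit y ↔ ¬ p ∣ y.val := by
  rw [← ZMod.isUnit_natCast_iff_not_dvd_pow hp.out (Nat.pos_of_ne_zero he), ZMod.natCast_zmod_val]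

lemma isUnit_iff_castHom_ne_zero (he : e ≠ 0) (y : ZMod (p ^ e)) :
    IsUnit y ↔ ZMod.castHom (dvd_pow_self p he) (ZMod p) y ≠ 0 := by
  rw [isUnit_iff_not_dvd_val he, ZMod.castHom_apply, ZMod.cast_eq_val, Ne,
    ZMod.natCast_eq_zero_iff]

lemma isUnit_or_isUnit_of_isUnit_sub (he : e ≠ 0) {y z : ZMod (p ^ e)} (h : IsUnit (y - z)) :
    IsUnit y ∨ IsUnit z := by
  simp only [isUnit_iff_castHom_ne_zero he, map_sub] at h ⊢
  by_contra! hyz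
  exact h (by rw [hyz.1, hyz.2, sub_zero])

lemma vp_eq_zero_of_isUnit (he : e ≠ 0) {y : ZMod (p ^ e)} (hy : IsUnit y) : vp p e y = 0 := by
  have hpy := (isUnit_iff_not_dvd_val he y).1 hy
  have hy0 : y ≠ 0 := by rintro rfl; simp at hpy
  rw [vp, if_neg hy0, padicValNat.eq_zero_of_not_dvd hpy, Nat.zero_min]

lemma exists_eq_pow_vp_mul_unit {y : ZMod (p ^ e)} (hy : y ≠ 0) :
    ∃ w, IsUnit w ∧ y = (p : ZMod (p ^ e)) ^ vp p e y * w := by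
  have hval : y.val ≠ 0 := (ZMod.val_ne_zero y).2 hy
  set v := padicValNat p y.val
  obtain ⟨m, hm⟩ : p ^ v ∣ y.val := pow_padicValNat_dvd
  have hlt : v < e := by
    have := (Nat.le_of_dvd (Nat.pos_of_ne_zero hval) ⟨m, hm⟩).trans_lt (ZMod.val_lt y)
    exact (Nat.pow_lt_pow_iff_right hp.out.one_lt).1 this
  have hpm : ¬ p ∣ m := by
    rintro ⟨m', hm'⟩
    have : p ^ (v + 1) ∣ y.val := ⟨m', by rw [hm, hm', pow_succ]; ring⟩
    exact pow_succ_padicValNat_not_dvd hval this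
  refine ⟨m, (ZMod.isUnit_natCast_iff_not_dvd_pow hp.out (by omega)).2 hpm, ?_⟩
  rw [vp, if_neg hy, min_eq_left hlt.le]
  conv_lhs => rw [← ZMod.natCast_zmod_val y, hm]
  push_cast; ring

lemma exists_sub_mul_sub_eq_pow_mul_unit (he : e ≠ 0) {α β x : ZMod (p ^ e)}
    (hαβ : IsUnit (α - β)) (hxα : x ≠ α) (hxβ : x ≠ β) :
    ∃ w, IsUnit w ∧ (x - α) * (x - β) =
      (p : ZMod (p ^ e)) ^ max (vp p e (x - α)) (vp p e (x - β)) * w := by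
  obtain ⟨w₁, hw₁, h₁⟩ := exists_eq_pow_vp_mul_unit (sub_ne_zero.2 hxα)
  obtain ⟨w₂, hw₂, h₂⟩ := exists_eq_pow_vp_mul_unit (sub_ne_zero.2 hxβ)
  have hmin : vp p e (x - α) = 0 ∨ vp p e (x - β) = 0 := by
    have : IsUnit ((x - β) - (x - α)) := by rwa [sub_sub_sub_cancel_left]
    rcases isUnit_or_isUnit_of_isUnit_sub he this with h | h
    · exact Or.inr (vp_eq_zero_of_isUnit he h)
    · exact Or.inl (vp_eq_zero_of_isUnit he h)
  have hmax : max (vp p e (x - α)) (vp p e (x - β)) = vp p e (x - α) + vp p e (x - β) := by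
    omega
  refine ⟨w₁ * w₂, hw₁.mul hw₂, ?_⟩
  rw [hmax, pow_add]
  linear_combination (x - β) * h₁ + (p : ZMod (p ^ e)) ^ vp p e (x - α) * w₁ * h₂

lemma pow_mul_eq_zero_iff {k : ℕ} (hk : k ≤ e) (c : ZMod (p ^ e)) :
    (p : ZMod (p ^ e)) ^ k * c = 0 ↔
      ZMod.castHom (pow_dvd_pow p (Nat.sub_le e k)) (ZMod (p ^ (e - k))) c = 0 := by
  have hpe : p ^ e = p ^ k * p ^ (e - k) := by rw [← pow_add, Nat.add_sub_cancel' hk]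
  have key (m : ℕ) : p ^ e ∣ p ^ k * m ↔ p ^ (e - k) ∣ m := by
    rw [hpe, Nat.mul_dvd_mul_iff_left (pow_pos hp.out.pos k)]
  rw [← ZMod.natCast_zmod_val c, map_natCast, ← Nat.cast_pow, ← Nat.cast_mul,
    ZMod.natCast_eq_zero_iff, ZMod.natCast_eq_zero_iff, key]

lemma pow_mul_unit_mul_pow_sub_pow_eq_zero_iff {k : ℕ} (hk : k ≤ e) {w α β : ZMod (p ^ e)}
    (hw : IsUnit w) (hβ : IsUnit β) (n : ℕ) :
    (p : ZMod (p ^ e)) ^ k * w * (α ^ n - β ^ n) = 0 ↔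
      orderOf (ZMod.castHom (pow_dvd_pow p (Nat.sub_le e k)) (ZMod (p ^ (e - k))) (α * β⁻¹))
        ∣ n := by
  have hβinv : (β⁻¹ * β) ^ n = 1 := by rw [ZMod.inv_mul_of_unit β hβ, one_pow]
  have hsplit : (p : ZMod (p ^ e)) ^ k * w * (α ^ n - β ^ n) =
      (w * β ^ n) * ((p : ZMod (p ^ e)) ^ k * ((α * β⁻¹) ^ n - 1)) := by
    linear_combination -(p : ZMod (p ^ e)) ^ k * w * α ^ n * hβinv
  rw [hsplit, (hw.mul (hβ.pow n)).mul_right_eq_zero, pow_mul_eq_zero_iff hk, map_sub, map_pow,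
    map_one, sub_eq_zero, orderOf_dvd_iff_pow_eq_one]

end PrimePower

theorem stmt15_general (p : ℕ) (hp : p.Prime) (hp2 : p ≠ 2) (e : ℕ) (he : 1 ≤ e)
    (a b α β : ZMod (p ^ e)) (hpb : (p : ZMod (p ^ e)) ∣ b)
    (hα : IsUnit α) (hβ : IsUnit β)
    (hfac : (X ^ 2 - C b * X - C a : Polynomial (ZMod (p ^ e)))
      = (X - C α) * (X - C β))
    (φ : ZMod (p ^ e) → ZMod (p ^ e))
    (hφ : ∀ x, φ x = if IsUnit x then a * x⁻¹ + b else b) :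
    IsUnit (α - β) ∧
    ∀ x0 : ZMod (p ^ e), IsUnit x0 → x0 ≠ α → x0 ≠ β →
      let k' := max (vp p e (x0 - α)) (vp p e (x0 - β))
      let T := orderOf
        ((ZMod.castHom (pow_dvd_pow p (Nat.sub_le e k')) (ZMod (p ^ (e - k'))))
          (α * β⁻¹))
      φ^[T] x0 = x0 ∧ ∀ T', 0 < T' → φ^[T'] x0 = x0 → T ≤ T' := by
  have : Fact p.Prime := ⟨hp⟩
  have he0 : e ≠ 0 := by omega
  obtain ⟨rfl, rfl⟩ := eq_add_and_eq_neg_mul_of_quadratic_eq hfac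
  set π := ZMod.castHom (dvd_pow_self p he0) (ZMod p)
  have hπβ : π β = -π α := by
    obtain ⟨c, hc⟩ := hpb
    have : π (α + β) = 0 := by rw [hc, map_mul, map_natCast, ZMod.natCast_self, zero_mul]
    rw [map_add] at this
    linear_combination this
  have h2 : (2 : ZMod p) ≠ 0 := Ring.two_ne_zero ((ZMod.ringChar_zmod_n p).trans_ne hp2)
  have hπα : π α ≠ 0 := (isUnit_iff_castHom_ne_zero he0 α).1 hα
  have hαβ : IsUnit (α - β) := by
    rw [isUnit_iff_castHom_ne_zero he0, map_sub, hπβ, sub_neg_eq_add, ← two_mul]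
    exact mul_ne_zero h2 hπα
  refine ⟨hαβ, ?_⟩
  intro x0 hx0 hxα hxβ k' T
  have hv (k : ℕ) : IsUnit (orbitSeq α β x0 k) := by
    rw [isUnit_iff_castHom_ne_zero he0, map_orbitSeq, hπβ]
    exact orbitSeq_neg_ne_zero h2 hπα ((isUnit_iff_castHom_ne_zero he0 x0).1 hx0) k
  obtain ⟨w, hw, hprod⟩ := exists_sub_mul_sub_eq_pow_mul_unit he0 hαβ hxα hxβ
  have hper (n : ℕ) : φ^[n] x0 = x0 ↔ T ∣ n := by
    rw [iterate_eq_self_iff (fun y hy => (hφ y).trans (if_pos hy)) hv, hprod]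
    exact pow_mul_unit_mul_pow_sub_pow_eq_zero_iff (max_le (vp_le _) (vp_le _)) hw hβ n
  exact ⟨(hper T).2 dvd_rfl, fun T' hT' hfix => Nat.le_of_dvd hT' ((hper T').1 hfix)⟩

/-- For `a` a unit, `b ∈ p·Z/p^e Z`, and `t² - b t - a = (t-α)(t-β)` with
`α, β` units: `α - β` is a unit, and for any unit `x₀ ∉ {α, β}` the orbit of
`x₀` under the inversive map is purely periodic with least period equal to
the multiplicative order of `αβ⁻¹` modulo `p^{e-k'}`, where
`k' = max (v_p(x₀-α)) (v_p(x₀-β))`. -/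
theorem stmt15 (p : ℕ) (hp : p.Prime) (hp2 : p ≠ 2) (e : ℕ) (he : 1 ≤ e)
    (a b α β : ZMod (p ^ e)) (ha : IsUnit a) (hpb : (p : ZMod (p ^ e)) ∣ b)
    (hα : IsUnit α) (hβ : IsUnit β)
    (hfac : (X ^ 2 - C b * X - C a : Polynomial (ZMod (p ^ e)))
      = (X - C α) * (X - C β))
    (φ : ZMod (p ^ e) → ZMod (p ^ e))
    (hφ : ∀ x, φ x = if IsUnit x then a * x⁻¹ + b else b) :
    IsUnit (α - β) ∧
    ∀ x0 : ZMod (p ^ e), IsUnit x0 → x0 ≠ α → x0 ≠ β →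
      let k' := max (vp p e (x0 - α)) (vp p e (x0 - β))
      let T := orderOf
        ((ZMod.castHom (pow_dvd_pow p (Nat.sub_le e k')) (ZMod (p ^ (e - k'))))
          (α * β⁻¹))
      φ^[T] x0 = x0 ∧ ∀ T', 0 < T' → φ^[T'] x0 = x0 → T ≤ T' :=
  stmt15_general p hp hp2 e he a b α β hpb hα hβ hfac φ hφ
end

section
/- Let p be an odd prime and a, b units in Z/pZ with 4a + b² ≡ 0 (mod p). Define φ(x) = a x⁻¹ + b for x ≠ 0 and φ(0) = b. Then the functional graph of φ on Z/pZ is exactly one fixed point (namely α = b/2) together with a single cycle through all remaining p - 1 elements; equivalently, φ restricted to Z/pZ \ {α} is a cyclic permutation of order p - 1. -/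
/-!
Writing `α = b/2`, the hypothesis `4a + b² = 0` means `a = -α²`, so `φ` is the parabolic Möbius
map `x ↦ (2αx - α²)/x`, whose only fixed point is `α`; it is conjugate to a translation by
`x ↦ 1/(x - α)`. Concretely `φⁿ(0) = α(n+1)/n` for `n < p`; for `0 < n < p` these values run
through every element other than `α`, ending with `φ^(p-1)(0) = 0`, so the orbit of `0` is one
cycle through all `p - 1` points different from `α`.
-/

theorem Function.IsPeriodicPt.exists_iterate_iterate_eq {α : Type*} {f : α → α} {n : ℕ} {x : α}
    (h : Function.IsPeriodicPt f n x) {i : ℕ} (hi : i ≤ n) (j : ℕ) :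
    ∃ m, f^[m] (f^[i] x) = f^[j] x :=
  ⟨j + (n - i), by
    rw [← Function.iterate_add_apply, Nat.add_assoc, Nat.sub_add_cancel hi,
      Function.iterate_add_apply, h.eq]⟩

section ParabolicMap

variable {K : Type*} [Field K] (α : K)

def parabolicMap (x : K) : K := -α ^ 2 * x⁻¹ + 2 * α

theorem parabolicMap_self : parabolicMap α α = α := by
  rw [parabolicMap, neg_mul, sq, mul_self_mul_inv]
  ring

variable {α}

theorem eq_of_parabolicMap_eq_self (h2 : (2 : K) ≠ 0) (hα : α ≠ 0) {x : K}
    (hx : parabolicMap α x = x) : x = α := by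
  rcases eq_or_ne x 0 with rfl | hx0
  · simp [parabolicMap, h2, hα] at hx
  · have hsq : (x - α) ^ 2 = 0 := by
      rw [parabolicMap] at hx
      field_simp at hx
      linear_combination -hx
    exact sub_eq_zero.mp (pow_eq_zero_iff two_ne_zero |>.mp hsq)

variable (α)

theorem parabolicMap_mul_div {t : K} (ht : t + 1 ≠ 0) :
    parabolicMap α (α * (t + 1) / t) = α * (t + 2) / (t + 1) := by
  rcases eq_or_ne t 0 with rfl | ht0
  · simp [parabolicMap, mul_comm]
  rcases eq_or_ne α 0 with rfl | hα
  · simp [parabolicMap]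
  rw [parabolicMap]
  field_simp
  ring

/-- At `n = 0` the right-hand side is `0` because `0⁻¹ = 0`. -/
theorem iterate_parabolicMap_zero {p : ℕ} [CharP K p] {n : ℕ} (hn : n < p) :
    (parabolicMap α)^[n] 0 = α * (n + 1) / n := by
  induction n with
  | zero => simp
  | succ n ih =>
    have hn1 : ((n : K) + 1) ≠ 0 := by
      exact_mod_cast (CharP.cast_eq_zero_iff K p (n + 1)).not.mpr
        (Nat.not_dvd_of_pos_of_lt n.succ_pos hn)
    rw [Function.iterate_succ_apply', ih (by omega), parabolicMap_mul_div α hn1]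
    push_cast
    ring

theorem isPeriodicPt_parabolicMap_zero (p : ℕ) [CharP K p] :
    Function.IsPeriodicPt (parabolicMap α) (p - 1) 0 := by
  rcases Nat.eq_zero_or_pos p with rfl | hp
  · exact Function.isPeriodicPt_zero _ _
  rw [Function.IsPeriodicPt, Function.IsFixedPt,
    iterate_parabolicMap_zero α (by omega : p - 1 < p), Nat.cast_pred hp, sub_add_cancel, CharP.cast_eq_zero, mul_zero, zero_div]

end ParabolicMap

theorem ZMod.exists_iterate_parabolicMap_zero_eq {p : ℕ} [Fact p.Prime] {α : ZMod p} (hα : α ≠ 0)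
    {y : ZMod p} (hy : y ≠ α) : ∃ n < p, (parabolicMap α)^[n] 0 = y := by
  have hyα : y - α ≠ 0 := sub_ne_zero.mpr hy
  refine ⟨(α / (y - α)).val, ZMod.val_lt _, ?_⟩
  rw [iterate_parabolicMap_zero α (ZMod.val_lt _), ZMod.natCast_zmod_val]
  field_simp
  ring

theorem stmt18_general (p : ℕ) (hp : p.Prime) (hp2 : p ≠ 2)
    (a b : ZMod p) (hb : IsUnit b)
    (hΔ : 4 * a + b ^ 2 = 0)
    (φ : ZMod p → ZMod p)
    (hφ : ∀ x, φ x = if x ≠ 0 then a * x⁻¹ + b else b) :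
    φ (b * 2⁻¹) = b * 2⁻¹ ∧
    (∀ x : ZMod p, φ x = x → x = b * 2⁻¹) ∧
    ∀ x y : ZMod p, x ≠ b * 2⁻¹ → y ≠ b * 2⁻¹ → ∃ n, φ^[n] x = y := by
  have : Fact p.Prime := ⟨hp⟩
  have h2 : (2 : ZMod p) ≠ 0 := by
    exact_mod_cast (ZMod.natCast_eq_zero_iff 2 p).not.mpr
      fun h => hp2 ((Nat.prime_dvd_prime_iff_eq hp Nat.prime_two).mp h)
  set α := b * 2⁻¹
  have hα : α ≠ 0 := mul_ne_zero hb.ne_zero (inv_ne_zero h2)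
  have hφα : φ = parabolicMap α := by
    have hb' : b = 2 * α := by rw [mul_left_comm, mul_inv_cancel₀ h2, mul_one]
    have ha' : a = -α ^ 2 :=
      mul_left_cancel₀ (mul_ne_zero h2 h2) (by linear_combination hΔ - (b + 2 * α) * hb')
    funext x
    rw [hφ, parabolicMap, ha', hb']
    split_ifs <;> simp_all
  subst hφα
  refine ⟨parabolicMap_self α, fun x => eq_of_parabolicMap_eq_self h2 hα, fun x y hx hy => ?_⟩
  obtain ⟨i, hi, rfl⟩ := ZMod.exists_iterate_parabolicMap_zero_eq hα hx
  obtain ⟨j, -, rfl⟩ := ZMod.exists_iterate_parabolicMap_zero_eq hα hy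
  exact (isPeriodicPt_parabolicMap_zero α p).exists_iterate_iterate_eq (by omega) j

/-- For `a, b` units in `Z/pZ` with `4a + b² = 0`, the inversive map has the
single fixed point `α = b/2`, and `φ` restricted to the remaining `p - 1`
elements is a single cycle: the orbit of any `x ≠ α` visits every `y ≠ α`. -/
theorem stmt18 (p : ℕ) (hp : p.Prime) (hp2 : p ≠ 2)
    (a b : ZMod p) (ha : IsUnit a) (hb : IsUnit b)
    (hΔ : 4 * a + b ^ 2 = 0)
    (φ : ZMod p → ZMod p)
    (hφ : ∀ x, φ x = if x ≠ 0 then a * x⁻¹ + b else b) :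
    φ (b * 2⁻¹) = b * 2⁻¹ ∧
    (∀ x : ZMod p, φ x = x → x = b * 2⁻¹) ∧
    ∀ x y : ZMod p, x ≠ b * 2⁻¹ → y ≠ b * 2⁻¹ → ∃ n, φ^[n] x = y :=
  stmt18_general p hp hp2 a b hb hΔ φ hφ
end
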